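/- arXiv:1605.03992 — 2 statements merged into one kernel-verified Lean document; each statement's English description precedes it below -/
import Mathlib

section
/- Let n_x, n_y ≥ 1, N = n_x + n_y, fix real data z = (x_1,...,x_{n_x}, y_1,...,y_{n_y}) with group sample means x̄ and ȳ, and fix m with 0 ≤ m ≤ min(n_x, n_y). Let π be uniform on Π(m) and let x̄*, ȳ* denote the group sample means of the permuted dataset z* corresponding to π. Then E[x̄*] = x̄ + (m/n_x)(ȳ − x̄) and E[ȳ*] = ȳ + (m/n_y)(x̄ − ȳ). -/
open Finset

/-- Distance between a permutation and the observed ordering: the number of the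
first `nx` indices that `π` maps outside the first `nx` positions. -/
def pdist (nx ny : ℕ) (π : Equiv.Perm (Fin (nx + ny))) : ℕ :=
  nx - (Finset.univ.filter (fun i : Fin nx => ((π (Fin.castAdd ny i)) : ℕ) < nx)).card

/-- The partition `Π(m)`: the set of permutations at distance `m`. -/
def PartM (nx ny m : ℕ) : Finset (Equiv.Perm (Fin (nx + ny))) :=
  Finset.univ.filter (fun π => pdist nx ny π = m)

/-- Expectation of `f` under the uniform distribution on a finite set `s`. -/
noncomputable def uexp {α : Type*} (s : Finset α) (f : α → ℝ) : ℝ :=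
  (∑ a ∈ s, f a) / s.card

/-- Variance of `f` under the uniform distribution on a finite set `s`. -/
noncomputable def fvar {α : Type*} (s : Finset α) (f : α → ℝ) : ℝ :=
  uexp s (fun a => (f a - uexp s f) ^ 2)

/-- Covariance of `f` and `g` under the uniform distribution on a finite set `s`. -/
noncomputable def fcov {α : Type*} (s : Finset α) (f g : α → ℝ) : ℝ :=
  uexp s (fun a => (f a - uexp s f) * (g a - uexp s g))

/-- Indicator that observation `i` of group x is exchanged out of group x under `π`. -/
def deltaX (nx ny : ℕ) (π : Equiv.Perm (Fin (nx + ny))) (i : Fin nx) : ℝ :=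
  if nx ≤ ((π (Fin.castAdd ny i)) : ℕ) then 1 else 0

/-- Indicator that observation `j` of group y is exchanged into group x under `π`. -/
def deltaY (nx ny : ℕ) (π : Equiv.Perm (Fin (nx + ny))) (j : Fin ny) : ℝ :=
  if ((π (Fin.natAdd nx j)) : ℕ) < nx then 1 else 0

/-- Sum of the x-observations exchanged out of group x. -/
noncomputable def Wx (nx ny : ℕ) (x : Fin nx → ℝ) (π : Equiv.Perm (Fin (nx + ny))) : ℝ :=
  ∑ i : Fin nx, deltaX nx ny π i * x i

/-- Sum of the y-observations exchanged into group x. -/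
noncomputable def Wy (nx ny : ℕ) (y : Fin ny → ℝ) (π : Equiv.Perm (Fin (nx + ny))) : ℝ :=
  ∑ j : Fin ny, deltaY nx ny π j * y j

/-- Mean of the first `nx` entries of the permuted dataset `z*` (where `z*_{π i} = z i`). -/
noncomputable def xstar (nx ny : ℕ) (z : Fin (nx + ny) → ℝ) (π : Equiv.Perm (Fin (nx + ny))) : ℝ :=
  (∑ i : Fin nx, z (π.symm (Fin.castAdd ny i))) / nx

/-- Mean of the last `ny` entries of the permuted dataset `z*` (where `z*_{π i} = z i`). -/
noncomputable def ystar (nx ny : ℕ) (z : Fin (nx + ny) → ℝ) (π : Equiv.Perm (Fin (nx + ny))) : ℝ :=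
  (∑ j : Fin ny, z (π.symm (Fin.natAdd nx j))) / ny

/-- `W(π) = W_y(π) - W_x(π)` computed from the pooled data `z`. -/
noncomputable def WZ (nx ny : ℕ) (z : Fin (nx + ny) → ℝ) (π : Equiv.Perm (Fin (nx + ny))) : ℝ :=
  (∑ j : Fin ny, deltaY nx ny π j * z (Fin.natAdd nx j))
    - (∑ i : Fin nx, deltaX nx ny π i * z (Fin.castAdd ny i))

section Aux
variable {nx ny m : ℕ}

private lemma card_filter_comp_perm {α : Type*} [DecidableEq α] [Fintype α]
    (σ : Equiv.Perm α) (p : α → Prop) [DecidablePred p] :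
    (univ.filter (fun a => p (σ a))).card = (univ.filter p).card := by
  apply Finset.card_bij (fun a _ => σ a)
  · intro a ha; simp only [mem_filter, mem_univ, true_and] at ha ⊢; exact ha
  · intro a _ b _ h; exact σ.injective h
  · intro b hb
    refine ⟨σ.symm b, ?_, by simp⟩
    simp only [mem_filter, mem_univ, true_and, Equiv.apply_symm_apply] at hb ⊢
    exact hb

private lemma natAdd_inj : Function.Injective (Fin.natAdd nx : Fin ny → Fin (nx + ny)) := by
  intro a b h
  have := congrArg (fun k : Fin (nx + ny) => (k : ℕ)) h
  simp only [Fin.coe_natAdd] at this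
  exact Fin.ext (by omega)

private lemma sum_deltaX_eq (hmx : m ≤ nx) {π : Equiv.Perm (Fin (nx + ny))}
    (hπ : π ∈ PartM nx ny m) : ∑ i : Fin nx, deltaX nx ny π i = m := by
  have hd : pdist nx ny π = m := by simpa [PartM] using hπ
  have hsplit := Finset.card_filter_add_card_filter_not
    (s := (univ : Finset (Fin nx))) (p := fun i => ((π (Fin.castAdd ny i)) : ℕ) < nx)
  simp only [card_univ, Fintype.card_fin] at hsplit
  unfold pdist at hd
  have hcard : (univ.filter (fun i : Fin nx => ¬ ((π (Fin.castAdd ny i)) : ℕ) < nx)).card = m := by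
    omega
  have : ∑ i : Fin nx, deltaX nx ny π i
      = ((univ.filter (fun i : Fin nx => nx ≤ ((π (Fin.castAdd ny i)) : ℕ))).card : ℝ) := by
    simp [deltaX]
  rw [this, ← hcard]
  norm_cast
  congr 1
  ext i
  simp [not_lt]

private lemma sum_ind_all (π : Equiv.Perm (Fin (nx + ny))) :
    ∑ k : Fin (nx + ny), (if ((π k : ℕ) < nx) then (1 : ℝ) else 0) = nx := by
  rw [Equiv.sum_comp π (fun p : Fin (nx + ny) => if ((p : ℕ) < nx) then (1 : ℝ) else 0)]
  rw [Fin.sum_univ_add]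
  simp [Fin.coe_castAdd, Fin.coe_natAdd]

private lemma ind_eq_one_sub_deltaX (π : Equiv.Perm (Fin (nx + ny))) (i : Fin nx) :
    (if ((π (Fin.castAdd ny i) : ℕ) < nx) then (1 : ℝ) else 0) = 1 - deltaX nx ny π i := by
  unfold deltaX
  rcases lt_or_ge ((π (Fin.castAdd ny i) : ℕ)) nx with h | h
  · simp [h, Nat.not_le.mpr h]
  · simp [h, Nat.not_lt.mpr h]

private lemma sum_deltaY_eq (hmx : m ≤ nx) {π : Equiv.Perm (Fin (nx + ny))}
    (hπ : π ∈ PartM nx ny m) : ∑ j : Fin ny, deltaY nx ny π j = m := by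
  have h1 := sum_ind_all (nx := nx) (ny := ny) π
  rw [Fin.sum_univ_add] at h1
  simp only [ind_eq_one_sub_deltaX] at h1
  rw [Finset.sum_sub_distrib, sum_deltaX_eq hmx hπ] at h1
  simp only [Finset.sum_const, card_univ, Fintype.card_fin, nsmul_eq_mul, mul_one] at h1
  have : ∑ j : Fin ny, deltaY nx ny π j
      = ∑ j : Fin ny, (if ((π (Fin.natAdd nx j) : ℕ) < nx) then (1 : ℝ) else 0) := by
    simp [deltaY]
  rw [this]; linarith


private lemma pdist_mul_swapX (π : Equiv.Perm (Fin (nx + ny))) (i i' : Fin nx) :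
    pdist nx ny (π * Equiv.swap (Fin.castAdd ny i) (Fin.castAdd ny i')) = pdist nx ny π := by
  unfold pdist
  congr 1
  have key : ∀ t : Fin nx,
      ((π * Equiv.swap (Fin.castAdd ny i) (Fin.castAdd ny i')) (Fin.castAdd ny t))
        = π (Fin.castAdd ny (Equiv.swap i i' t)) := by
    intro t
    simp [Equiv.Perm.mul_apply, (Fin.castAdd_injective nx ny).swap_apply]
  simp only [key]
  exact card_filter_comp_perm (Equiv.swap i i') (fun t => ((π (Fin.castAdd ny t)) : ℕ) < nx)

private lemma pdist_mul_swapY (π : Equiv.Perm (Fin (nx + ny))) (j j' : Fin ny) :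
    pdist nx ny (π * Equiv.swap (Fin.natAdd nx j) (Fin.natAdd nx j')) = pdist nx ny π := by
  unfold pdist
  congr 1
  have key : ∀ t : Fin nx,
      ((π * Equiv.swap (Fin.natAdd nx j) (Fin.natAdd nx j')) (Fin.castAdd ny t))
        = π (Fin.castAdd ny t) := by
    intro t
    have h1 : Fin.castAdd ny t ≠ Fin.natAdd nx j := by
      intro h
      have := congrArg (fun k : Fin (nx + ny) => (k : ℕ)) h
      simp only [Fin.coe_castAdd, Fin.coe_natAdd] at this
      omega
    have h2 : Fin.castAdd ny t ≠ Fin.natAdd nx j' := by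
      intro h
      have := congrArg (fun k : Fin (nx + ny) => (k : ℕ)) h
      simp only [Fin.coe_castAdd, Fin.coe_natAdd] at this
      omega
    simp [Equiv.Perm.mul_apply, Equiv.swap_apply_of_ne_of_ne h1 h2]
  simp only [key]

private lemma sum_deltaX_indep (i i' : Fin nx) :
    ∑ π ∈ PartM nx ny m, deltaX nx ny π i = ∑ π ∈ PartM nx ny m, deltaX nx ny π i' := by
  apply Finset.sum_equiv (Equiv.mulRight (Equiv.swap (Fin.castAdd ny i) (Fin.castAdd ny i')))
  · intro π
    simp [PartM, Equiv.mulRight, pdist_mul_swapX]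
  · intro π _
    unfold deltaX
    congr 1
    simp [Equiv.mulRight, Equiv.Perm.mul_apply]

private lemma sum_deltaY_indep (j j' : Fin ny) :
    ∑ π ∈ PartM nx ny m, deltaY nx ny π j = ∑ π ∈ PartM nx ny m, deltaY nx ny π j' := by
  apply Finset.sum_equiv (Equiv.mulRight (Equiv.swap (Fin.natAdd nx j) (Fin.natAdd nx j')))
  · intro π
    simp [PartM, Equiv.mulRight, pdist_mul_swapY]
  · intro π _
    unfold deltaY
    congr 1
    simp [Equiv.mulRight, Equiv.Perm.mul_apply]


private lemma partm_nonempty (hmx : m ≤ nx) (hmy : m ≤ ny) :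
    (PartM nx ny m).Nonempty := by
  classical
  set f : Fin (nx + ny) → Fin (nx + ny) := fun k =>
    if h : (k : ℕ) < m then ⟨(k : ℕ) + nx, by omega⟩
    else if h2 : nx ≤ (k : ℕ) ∧ (k : ℕ) < nx + m then ⟨(k : ℕ) - nx, by omega⟩
    else k with hf
  have hval : ∀ k : Fin (nx + ny), ((f k) : ℕ)
      = if (k : ℕ) < m then (k : ℕ) + nx
        else if nx ≤ (k : ℕ) ∧ (k : ℕ) < nx + m then (k : ℕ) - nx else (k : ℕ) := by
    intro k
    simp only [hf]
    split_ifs <;> rfl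
  have hinv : Function.Involutive f := by
    intro k
    have hk := k.isLt
    apply Fin.ext
    rw [hval (f k), hval k]
    split_ifs <;> omega
  refine ⟨hinv.toPerm f, ?_⟩
  simp only [PartM, mem_filter, mem_univ, true_and]
  unfold pdist
  have hfe : (univ.filter (fun i : Fin nx => (((hinv.toPerm f) (Fin.castAdd ny i) : ℕ) < nx)))
      = univ.filter (fun i : Fin nx => m ≤ (i : ℕ)) := by
    apply Finset.filter_congr
    intro i _
    have hi : (i : ℕ) < nx := i.isLt
    simp only [Function.Involutive.coe_toPerm, eq_iff_iff]
    rw [hval]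
    have hcoe : ((Fin.castAdd ny i : Fin (nx + ny)) : ℕ) = (i : ℕ) := rfl
    rw [hcoe]
    constructor
    · intro h
      by_contra hc
      rw [if_pos (by omega)] at h
      omega
    · intro h
      rw [if_neg (by omega), if_neg (by omega)]
      omega
  rw [hfe]
  have hcard : (univ.filter (fun i : Fin nx => m ≤ (i : ℕ))).card = nx - m := by
    rw [← Fintype.card_fin (nx - m), ← Finset.card_univ]
    refine Finset.card_bij'
      (fun (a : Fin nx) (ha : a ∈ univ.filter fun i : Fin nx => m ≤ (i : ℕ)) =>
        (⟨(a : ℕ) - m, by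
          simp only [mem_filter, mem_univ, true_and] at ha
          have h2 := a.isLt
          omega⟩ : Fin (nx - m)))
      (fun (t : Fin (nx - m)) _ => (⟨(t : ℕ) + m, by
          have h2 := t.isLt
          omega⟩ : Fin nx)) ?_ ?_ ?_ ?_
    · intro a ha
      simp
    · intro t ht
      simp only [mem_filter, mem_univ, true_and]
      exact Nat.le_add_left m t
    · intro a ha
      simp only [mem_filter, mem_univ, true_and] at ha
      apply Fin.ext
      show (a : ℕ) - m + m = (a : ℕ)
      omega
    · intro t ht
      apply Fin.ext
      show (t : ℕ) + m - m = (t : ℕ)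
      omega
  rw [hcard]
  omega

private lemma sum_partm_deltaX (hmx : m ≤ nx) (hx : 1 ≤ nx) (i : Fin nx) :
    ∑ π ∈ PartM nx ny m, deltaX nx ny π i
      = (m : ℝ) * (PartM nx ny m).card / nx := by
  have key : (nx : ℝ) * (∑ π ∈ PartM nx ny m, deltaX nx ny π i)
      = (m : ℝ) * (PartM nx ny m).card := by
    calc (nx : ℝ) * ∑ π ∈ PartM nx ny m, deltaX nx ny π i
        = ∑ _i' : Fin nx, ∑ π ∈ PartM nx ny m, deltaX nx ny π i := by
          simp [Finset.sum_const, card_univ, mul_comm]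
      _ = ∑ i' : Fin nx, ∑ π ∈ PartM nx ny m, deltaX nx ny π i' :=
          Finset.sum_congr rfl (fun i' _ => sum_deltaX_indep i i')
      _ = ∑ π ∈ PartM nx ny m, ∑ i' : Fin nx, deltaX nx ny π i' := Finset.sum_comm
      _ = ∑ π ∈ PartM nx ny m, (m : ℝ) :=
          Finset.sum_congr rfl (fun π hπ => sum_deltaX_eq hmx hπ)
      _ = (m : ℝ) * (PartM nx ny m).card := by simp [mul_comm]
  have hnx : (nx : ℝ) ≠ 0 := by positivity
  rw [eq_div_iff hnx]
  linarith [key]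

private lemma sum_partm_deltaY (hmx : m ≤ nx) (hy : 1 ≤ ny) (j : Fin ny) :
    ∑ π ∈ PartM nx ny m, deltaY nx ny π j
      = (m : ℝ) * (PartM nx ny m).card / ny := by
  have key : (ny : ℝ) * (∑ π ∈ PartM nx ny m, deltaY nx ny π j)
      = (m : ℝ) * (PartM nx ny m).card := by
    calc (ny : ℝ) * ∑ π ∈ PartM nx ny m, deltaY nx ny π j
        = ∑ _j' : Fin ny, ∑ π ∈ PartM nx ny m, deltaY nx ny π j := by
          simp [Finset.sum_const, card_univ, mul_comm]
      _ = ∑ j' : Fin ny, ∑ π ∈ PartM nx ny m, deltaY nx ny π j' :=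
          Finset.sum_congr rfl (fun j' _ => sum_deltaY_indep j j')
      _ = ∑ π ∈ PartM nx ny m, ∑ j' : Fin ny, deltaY nx ny π j' := Finset.sum_comm
      _ = ∑ π ∈ PartM nx ny m, (m : ℝ) :=
          Finset.sum_congr rfl (fun π hπ => sum_deltaY_eq hmx hπ)
      _ = (m : ℝ) * (PartM nx ny m).card := by simp [mul_comm]
  have hny : (ny : ℝ) ≠ 0 := by positivity
  rw [eq_div_iff hny]
  linarith [key]

private lemma xsum_decomp (z : Fin (nx + ny) → ℝ) (π : Equiv.Perm (Fin (nx + ny))) :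
    ∑ i : Fin nx, z (π.symm (Fin.castAdd ny i))
      = (∑ i : Fin nx, z (Fin.castAdd ny i))
        - (∑ i : Fin nx, deltaX nx ny π i * z (Fin.castAdd ny i))
        + (∑ j : Fin ny, deltaY nx ny π j * z (Fin.natAdd nx j)) := by
  have h1 : ∑ i : Fin nx, z (π.symm (Fin.castAdd ny i))
      = ∑ p : Fin (nx + ny), (if (p : ℕ) < nx then z (π.symm p) else 0) := by
    rw [Fin.sum_univ_add (f := fun p : Fin (nx + ny) =>
      if (p : ℕ) < nx then z (π.symm p) else 0)]
    simp [Fin.coe_castAdd, Fin.coe_natAdd]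
  have h2 : ∑ p : Fin (nx + ny), (if (p : ℕ) < nx then z (π.symm p) else 0)
      = ∑ k : Fin (nx + ny), (if ((π k : ℕ) < nx) then z k else 0) := by
    rw [← Equiv.sum_comp π (fun p : Fin (nx + ny) =>
      if (p : ℕ) < nx then z (π.symm p) else 0)]
    exact Finset.sum_congr rfl (fun k _ => by simp)
  rw [h1, h2, Fin.sum_univ_add (f := fun k : Fin (nx + ny) =>
    if ((π k : ℕ) < nx) then z k else 0)]
  congr 1
  · rw [← Finset.sum_sub_distrib]
    apply Finset.sum_congr rfl
    intro i _
    unfold deltaX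
    rcases lt_or_ge ((π (Fin.castAdd ny i) : ℕ)) nx with h | h
    · simp [h, Nat.not_le.mpr h]
    · simp [h, Nat.not_lt.mpr h]
  · apply Finset.sum_congr rfl
    intro j _
    unfold deltaY
    rcases lt_or_ge ((π (Fin.natAdd nx j) : ℕ)) nx with h | h
    · simp [h]
    · simp [Nat.not_lt.mpr h]

private lemma ysum_decomp (z : Fin (nx + ny) → ℝ) (π : Equiv.Perm (Fin (nx + ny))) :
    ∑ j : Fin ny, z (π.symm (Fin.natAdd nx j))
      = (∑ j : Fin ny, z (Fin.natAdd nx j))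
        + (∑ i : Fin nx, deltaX nx ny π i * z (Fin.castAdd ny i))
        - (∑ j : Fin ny, deltaY nx ny π j * z (Fin.natAdd nx j)) := by
  have htot : (∑ i : Fin nx, z (π.symm (Fin.castAdd ny i)))
      + (∑ j : Fin ny, z (π.symm (Fin.natAdd nx j)))
      = (∑ i : Fin nx, z (Fin.castAdd ny i)) + (∑ j : Fin ny, z (Fin.natAdd nx j)) := by
    rw [← Fin.sum_univ_add (f := fun k : Fin (nx + ny) => z (π.symm k))]
    rw [Equiv.sum_comp π.symm z]
    exact Fin.sum_univ_add z
  have hx := xsum_decomp z π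
  linarith

end Aux

/-- under the uniform distribution on `Π(m)`,
`E[x̄*] = x̄ + (m/nx)(ȳ - x̄)` and `E[ȳ*] = ȳ + (m/ny)(x̄ - ȳ)`. -/
theorem permuted_mean_expectation (nx ny : ℕ) (hx : 1 ≤ nx) (hy : 1 ≤ ny)
    (z : Fin (nx + ny) → ℝ) (m : ℕ) (hm : m ≤ min nx ny) :
    uexp (PartM nx ny m) (xstar nx ny z)
        = (∑ i : Fin nx, z (Fin.castAdd ny i)) / nx
          + ((m : ℝ) / nx) * ((∑ j : Fin ny, z (Fin.natAdd nx j)) / ny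
              - (∑ i : Fin nx, z (Fin.castAdd ny i)) / nx)
    ∧ uexp (PartM nx ny m) (ystar nx ny z)
        = (∑ j : Fin ny, z (Fin.natAdd nx j)) / ny
          + ((m : ℝ) / ny) * ((∑ i : Fin nx, z (Fin.castAdd ny i)) / nx
              - (∑ j : Fin ny, z (Fin.natAdd nx j)) / ny) := by
  have hmx : m ≤ nx := le_trans hm (min_le_left _ _)
  have hmy : m ≤ ny := le_trans hm (min_le_right _ _)
  obtain ⟨π0, hπ0⟩ := partm_nonempty hmx hmy
  have hcardpos : 0 < (PartM nx ny m).card := Finset.card_pos.mpr ⟨π0, hπ0⟩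
  have hc : ((PartM nx ny m).card : ℝ) ≠ 0 := by
    have : (0 : ℝ) < (PartM nx ny m).card := by exact_mod_cast hcardpos
    linarith
  have hnx : (nx : ℝ) ≠ 0 := by positivity
  have hny : (ny : ℝ) ≠ 0 := by positivity
  have hWx : ∑ π ∈ PartM nx ny m, (∑ i : Fin nx, deltaX nx ny π i * z (Fin.castAdd ny i))
      = ((m : ℝ) * (PartM nx ny m).card / nx) * (∑ i : Fin nx, z (Fin.castAdd ny i)) := by
    rw [Finset.sum_comm]
    calc ∑ i : Fin nx, ∑ π ∈ PartM nx ny m, deltaX nx ny π i * z (Fin.castAdd ny i)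
        = ∑ i : Fin nx, ((m : ℝ) * (PartM nx ny m).card / nx) * z (Fin.castAdd ny i) :=
          Finset.sum_congr rfl (fun i _ => by
            rw [← Finset.sum_mul, sum_partm_deltaX hmx hx i])
      _ = _ := by rw [← Finset.mul_sum]
  have hWy : ∑ π ∈ PartM nx ny m, (∑ j : Fin ny, deltaY nx ny π j * z (Fin.natAdd nx j))
      = ((m : ℝ) * (PartM nx ny m).card / ny) * (∑ j : Fin ny, z (Fin.natAdd nx j)) := by
    rw [Finset.sum_comm]
    calc ∑ j : Fin ny, ∑ π ∈ PartM nx ny m, deltaY nx ny π j * z (Fin.natAdd nx j)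
        = ∑ j : Fin ny, ((m : ℝ) * (PartM nx ny m).card / ny) * z (Fin.natAdd nx j) :=
          Finset.sum_congr rfl (fun j _ => by
            rw [← Finset.sum_mul, sum_partm_deltaY hmx hy j])
      _ = _ := by rw [← Finset.mul_sum]
  have hXsum : ∑ π ∈ PartM nx ny m, xstar nx ny z π
      = (((PartM nx ny m).card : ℝ) * (∑ i : Fin nx, z (Fin.castAdd ny i))
          - ((m : ℝ) * (PartM nx ny m).card / nx) * (∑ i : Fin nx, z (Fin.castAdd ny i))
          + ((m : ℝ) * (PartM nx ny m).card / ny) * (∑ j : Fin ny, z (Fin.natAdd nx j))) / nx := by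
    unfold xstar
    rw [← Finset.sum_div]
    congr 1
    calc ∑ π ∈ PartM nx ny m, ∑ i : Fin nx, z (π.symm (Fin.castAdd ny i))
        = ∑ π ∈ PartM nx ny m,
            ((∑ i : Fin nx, z (Fin.castAdd ny i))
              - (∑ i : Fin nx, deltaX nx ny π i * z (Fin.castAdd ny i))
              + (∑ j : Fin ny, deltaY nx ny π j * z (Fin.natAdd nx j))) :=
          Finset.sum_congr rfl (fun π _ => xsum_decomp z π)
      _ = _ := by
          rw [Finset.sum_add_distrib, Finset.sum_sub_distrib, Finset.sum_const, hWx, hWy]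
          simp [nsmul_eq_mul]
  have hYsum : ∑ π ∈ PartM nx ny m, ystar nx ny z π
      = (((PartM nx ny m).card : ℝ) * (∑ j : Fin ny, z (Fin.natAdd nx j))
          + ((m : ℝ) * (PartM nx ny m).card / nx) * (∑ i : Fin nx, z (Fin.castAdd ny i))
          - ((m : ℝ) * (PartM nx ny m).card / ny) * (∑ j : Fin ny, z (Fin.natAdd nx j))) / ny := by
    unfold ystar
    rw [← Finset.sum_div]
    congr 1
    calc ∑ π ∈ PartM nx ny m, ∑ j : Fin ny, z (π.symm (Fin.natAdd nx j))
        = ∑ π ∈ PartM nx ny m,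
            ((∑ j : Fin ny, z (Fin.natAdd nx j))
              + (∑ i : Fin nx, deltaX nx ny π i * z (Fin.castAdd ny i))
              - (∑ j : Fin ny, deltaY nx ny π j * z (Fin.natAdd nx j))) :=
          Finset.sum_congr rfl (fun π _ => ysum_decomp z π)
      _ = _ := by
          rw [Finset.sum_sub_distrib, Finset.sum_add_distrib, Finset.sum_const, hWx, hWy]
          simp [nsmul_eq_mul]
  constructor
  · unfold uexp
    rw [hXsum]
    field_simp
    ring
  · unfold uexp
    rw [hYsum]
    field_simp
    ring
end

section
/- Let n ≥ 1 and consider equal group sizes n_x = n_y = n, with real data x = (x_1,...,x_n) and y = (y_1,...,y_n) having sample means x̄ and ȳ. Fix m with 0 ≤ m ≤ n, let π be uniform on Π(m), and let x̄*, ȳ* be the group sample means of the permuted dataset corresponding to π. Then for the difference statistic R = x̄* − ȳ*, one has E[R] = (x̄ − ȳ)(1 − 2m/n). In particular, if n is even, the expectation is 0 when m = n/2, and its magnitude equals |x̄ − ȳ| when m = 0 or m = n. -/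
open Finset

/-! Right-multiplying `π` by a transposition of two positions in the same block does not change
`d(π)`. Hence, under the uniform law on `Π(m)`, all observations of group x leave group x with
the same probability, and all observations of group y enter it with the same probability; as
exactly `m` observations move each way, both probabilities are `m / n`. Since
`n x̄* = ∑ x - (x's moved out) + (y's moved in)`, this gives `E[n x̄*] = ∑ x - m x̄ + m ȳ`, and
`n ȳ* = ∑ x + ∑ y - n x̄*`. -/

section

variable {nx ny m : ℕ}

lemma mem_PartM {π : Equiv.Perm (Fin (nx + ny))} : π ∈ PartM nx ny m ↔ pdist nx ny π = m := by
  simp [PartM]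

lemma card_filter_castAdd (P : Fin (nx + ny) → Prop) [DecidablePred P] :
    #{i : Fin nx | P (Fin.castAdd ny i)} = #{p : Fin (nx + ny) | (p : ℕ) < nx ∧ P p} := by
  simp only [card_filter, Fin.sum_univ_add, Fin.val_castAdd, Fin.is_lt, true_and,
    Fin.val_natAdd, Nat.not_lt.mpr (Nat.le_add_right _ _), false_and, if_false, sum_const_zero,
    add_zero]

lemma pdist_eq_sub_card (π : Equiv.Perm (Fin (nx + ny))) :
    pdist nx ny π = nx - #{p : Fin (nx + ny) | (p : ℕ) < nx ∧ (π p : ℕ) < nx} := by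
  rw [pdist, card_filter_castAdd fun p => (π p : ℕ) < nx]

lemma pdist_mul_of_lt_iff (π σ : Equiv.Perm (Fin (nx + ny)))
    (hσ : ∀ p, (σ p : ℕ) < nx ↔ (p : ℕ) < nx) : pdist nx ny (π * σ) = pdist nx ny π := by
  rw [pdist_eq_sub_card, pdist_eq_sub_card, card_filter, card_filter]
  congr 1
  calc ∑ p : Fin (nx + ny), (if (p : ℕ) < nx ∧ ((π * σ) p : ℕ) < nx then 1 else 0)
      = ∑ p : Fin (nx + ny), (if (σ p : ℕ) < nx ∧ ((π * σ) p : ℕ) < nx then 1 else 0) := by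
        simp only [hσ]
    _ = ∑ p : Fin (nx + ny), (if (p : ℕ) < nx ∧ (π p : ℕ) < nx then 1 else 0) :=
        Equiv.sum_comp σ fun q => if (q : ℕ) < nx ∧ (π q : ℕ) < nx then 1 else 0

lemma swap_apply_lt_iff {a b : Fin (nx + ny)} (hab : (a : ℕ) < nx ↔ (b : ℕ) < nx)
    (p : Fin (nx + ny)) : (Equiv.swap a b p : ℕ) < nx ↔ (p : ℕ) < nx := by
  rw [Equiv.swap_apply_def]
  split_ifs with ha hb
  · subst ha; exact hab.symm
  · subst hb; exact hab
  · rfl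

lemma sum_PartM_apply_eq_of_lt_iff (f : Fin (nx + ny) → ℝ) {a b : Fin (nx + ny)}
    (hab : (a : ℕ) < nx ↔ (b : ℕ) < nx) :
    ∑ π ∈ PartM nx ny m, f (π a) = ∑ π ∈ PartM nx ny m, f (π b) := by
  refine sum_equiv (Equiv.mulRight (Equiv.swap a b)) (fun π => ?_) (fun π _ => ?_)
  · rw [mem_PartM, mem_PartM, Equiv.coe_mulRight, pdist_mul_of_lt_iff π _ (swap_apply_lt_iff hab)]
  · simp only [Equiv.coe_mulRight, Equiv.Perm.mul_apply, Equiv.swap_apply_right]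

lemma sum_PartM_apply_of_sum_eq {k : ℕ} (e : Fin k → Fin (nx + ny))
    (he : ∀ i i', (e i : ℕ) < nx ↔ (e i' : ℕ) < nx) (f : Fin (nx + ny) → ℝ) {c : ℝ}
    (hc : ∀ π ∈ PartM nx ny m, ∑ i, f (π (e i)) = c) (i : Fin k) :
    ∑ π ∈ PartM nx ny m, f (π (e i)) = #(PartM nx ny m) * c / k := by
  have hk : (k : ℝ) ≠ 0 := Nat.cast_ne_zero.mpr (Fin.pos i).ne'
  rw [eq_div_iff hk]
  calc (∑ π ∈ PartM nx ny m, f (π (e i))) * k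
      = ∑ i' : Fin k, ∑ π ∈ PartM nx ny m, f (π (e i')) := by
        rw [sum_congr rfl fun i' _ => sum_PartM_apply_eq_of_lt_iff f (he i' i), sum_const,
          card_univ, Fintype.card_fin, nsmul_eq_mul, mul_comm]
    _ = ∑ π ∈ PartM nx ny m, c := by rw [sum_comm]; exact sum_congr rfl hc
    _ = #(PartM nx ny m) * c := by rw [sum_const, nsmul_eq_mul]

lemma sum_symm_castAdd_eq_sum_ite (z : Fin (nx + ny) → ℝ) (π : Equiv.Perm (Fin (nx + ny))) :
    ∑ i : Fin nx, z (π.symm (Fin.castAdd ny i)) = ∑ p, if (π p : ℕ) < nx then z p else 0 := by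
  have h := Equiv.sum_comp π fun q => if (q : ℕ) < nx then z (π.symm q) else 0
  simp only [Equiv.symm_apply_apply] at h
  simp [h, Fin.sum_univ_add]

lemma sum_symm_castAdd_eq (z : Fin (nx + ny) → ℝ) (π : Equiv.Perm (Fin (nx + ny))) :
    ∑ i : Fin nx, z (π.symm (Fin.castAdd ny i))
      = ∑ i : Fin nx, z (Fin.castAdd ny i) - ∑ i, deltaX nx ny π i * z (Fin.castAdd ny i)
        + ∑ j, deltaY nx ny π j * z (Fin.natAdd nx j) := by
  rw [sum_symm_castAdd_eq_sum_ite, Fin.sum_univ_add, ← sum_sub_distrib]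
  congr 1
  · refine sum_congr rfl fun i _ => ?_
    simp only [deltaX]
    split_ifs <;> first | omega | ring
  · refine sum_congr rfl fun j _ => ?_
    simp only [deltaY]
    split_ifs <;> ring

lemma sum_symm_castAdd_add_sum_symm_natAdd (z : Fin (nx + ny) → ℝ)
    (π : Equiv.Perm (Fin (nx + ny))) :
    ∑ i : Fin nx, z (π.symm (Fin.castAdd ny i)) + ∑ j : Fin ny, z (π.symm (Fin.natAdd nx j))
      = ∑ i : Fin nx, z (Fin.castAdd ny i) + ∑ j : Fin ny, z (Fin.natAdd nx j) := by
  rw [← Fin.sum_univ_add (fun p => z (π.symm p)), ← Fin.sum_univ_add, Equiv.sum_comp]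

lemma sum_deltaX_of_mem_PartM {π : Equiv.Perm (Fin (nx + ny))} (hπ : π ∈ PartM nx ny m) :
    ∑ i, deltaX nx ny π i = m := by
  rw [mem_PartM, pdist] at hπ
  have hsplit := card_filter_add_card_filter_not (s := (univ : Finset (Fin nx)))
    (p := fun i => (π (Fin.castAdd ny i) : ℕ) < nx)
  simp only [card_univ, Fintype.card_fin, not_lt] at hsplit
  simp only [deltaX, sum_boole]
  norm_cast
  omega

lemma sum_deltaY_eq_sum_deltaX (π : Equiv.Perm (Fin (nx + ny))) :
    ∑ j, deltaY nx ny π j = ∑ i, deltaX nx ny π i := by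
  have h := sum_symm_castAdd_eq (fun _ => (1 : ℝ)) π
  simp only [mul_one] at h
  linarith

lemma sum_PartM_deltaX (i : Fin nx) :
    ∑ π ∈ PartM nx ny m, deltaX nx ny π i = #(PartM nx ny m) * m / nx :=
  sum_PartM_apply_of_sum_eq (Fin.castAdd ny) (by simp) (fun q => if nx ≤ (q : ℕ) then 1 else 0)
    (fun _ => sum_deltaX_of_mem_PartM) i

lemma sum_PartM_deltaY (j : Fin ny) :
    ∑ π ∈ PartM nx ny m, deltaY nx ny π j = #(PartM nx ny m) * m / ny :=
  sum_PartM_apply_of_sum_eq (Fin.natAdd nx) (by simp) (fun q => if (q : ℕ) < nx then 1 else 0)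
    (fun π hπ => (sum_deltaY_eq_sum_deltaX π).trans (sum_deltaX_of_mem_PartM hπ)) j

lemma sum_PartM_sum_symm_castAdd (z : Fin (nx + ny) → ℝ) :
    ∑ π ∈ PartM nx ny m, ∑ i : Fin nx, z (π.symm (Fin.castAdd ny i))
      = #(PartM nx ny m) * (∑ i : Fin nx, z (Fin.castAdd ny i)
          - m * ((∑ i : Fin nx, z (Fin.castAdd ny i)) / nx)
          + m * ((∑ j : Fin ny, z (Fin.natAdd nx j)) / ny)) := by
  simp only [sum_symm_castAdd_eq, sum_add_distrib, sum_sub_distrib, sum_const, nsmul_eq_mul]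
  rw [sum_comm (s := PartM nx ny m), sum_comm (s := PartM nx ny m)]
  simp only [← sum_mul, sum_PartM_deltaX, sum_PartM_deltaY, ← mul_sum]
  ring

def exchangeFirst (nx ny m : ℕ) (hy : m ≤ ny) (p : Fin (nx + ny)) : Fin (nx + ny) :=
  ⟨if (p : ℕ) < m then p + nx else if nx ≤ (p : ℕ) ∧ (p : ℕ) < nx + m then p - nx else p,
    by split_ifs <;> omega⟩

lemma exchangeFirst_involutive (hx : m ≤ nx) (hy : m ≤ ny) :
    Function.Involutive (exchangeFirst nx ny m hy) := fun p => by
  ext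
  simp only [exchangeFirst]
  split_ifs <;> omega

lemma pdist_exchangeFirst (hx : m ≤ nx) (hy : m ≤ ny) :
    pdist nx ny (exchangeFirst_involutive hx hy).toPerm = m := by
  have hlt : ∀ i : Fin nx,
      ((exchangeFirst nx ny m hy (Fin.castAdd ny i) : ℕ) < nx ↔ ¬ (i : ℕ) < m) := by
    intro i
    simp only [exchangeFirst, Fin.val_castAdd]
    split_ifs <;> omega
  have hsplit := card_filter_add_card_filter_not (s := (univ : Finset (Fin nx)))
    (p := fun i => (i : ℕ) < m)
  rw [Fin.card_filter_val_lt, card_univ, Fintype.card_fin] at hsplit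
  rw [pdist, Function.Involutive.coe_toPerm, filter_congr fun i _ => hlt i]
  omega

lemma PartM_nonempty (hx : m ≤ nx) (hy : m ≤ ny) : (PartM nx ny m).Nonempty :=
  ⟨_, mem_PartM.mpr (pdist_exchangeFirst hx hy)⟩

end

theorem uexp_xstar_sub_ystar {n m : ℕ} (hn : n ≠ 0) (hm : m ≤ n) (z : Fin (n + n) → ℝ) :
    uexp (PartM n n m) (fun π => xstar n n z π - ystar n n z π)
      = ((∑ i, z (Fin.castAdd n i)) / n - (∑ j, z (Fin.natAdd n j)) / n)
        * (1 - 2 * (m : ℝ) / n) := by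
  have hS : (#(PartM n n m) : ℝ) ≠ 0 :=
    Nat.cast_ne_zero.mpr (PartM_nonempty hm hm).card_pos.ne'
  have hpt : ∀ π, xstar n n z π - ystar n n z π
      = (2 * ∑ i, z (π.symm (Fin.castAdd n i))
          - (∑ i, z (Fin.castAdd n i) + ∑ j, z (Fin.natAdd n j))) / n := by
    intro π
    rw [xstar, ystar, ← sum_symm_castAdd_add_sum_symm_natAdd z π]
    ring
  rw [uexp]
  simp only [hpt, ← sum_div, sum_sub_distrib, ← mul_sum, sum_PartM_sum_symm_castAdd, sum_const,
    nsmul_eq_mul]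
  field_simp
  ring

/-- for equal group sizes `nx = ny = n`, under the uniform distribution
on `Π(m)`, `E[x̄* - ȳ*] = (x̄ - ȳ)(1 - 2m/n)`; in particular it is `0` when `2m = n`
and has magnitude `|x̄ - ȳ|` when `m = 0` or `m = n`. -/
theorem diff_mean_trend (n : ℕ) (hn : 1 ≤ n) (x y : Fin n → ℝ)
    (m : ℕ) (hm : m ≤ n) :
    uexp (PartM n n m)
        (fun π => xstar n n (Fin.append x y) π - ystar n n (Fin.append x y) π)
      = ((∑ i, x i) / n - (∑ j, y j) / n) * (1 - 2 * (m : ℝ) / n)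
    ∧ (2 * m = n →
        uexp (PartM n n m)
            (fun π => xstar n n (Fin.append x y) π - ystar n n (Fin.append x y) π) = 0)
    ∧ (m = 0 ∨ m = n →
        |uexp (PartM n n m)
            (fun π => xstar n n (Fin.append x y) π - ystar n n (Fin.append x y) π)|
          = |(∑ i, x i) / n - (∑ j, y j) / n|) := by
  have hn0 : (n : ℝ) ≠ 0 := Nat.cast_ne_zero.mpr (by omega)
  have h := uexp_xstar_sub_ystar (by omega) hm (Fin.append x y)
  simp only [Fin.append_left, Fin.append_right] at h
  refine ⟨h, fun h2m => ?_, ?_⟩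
  · have h2m' : 2 * (m : ℝ) = n := by exact_mod_cast h2m
    rw [h, h2m', div_self hn0, sub_self, mul_zero]
  · rintro (rfl | rfl)
    · simp [h]
    · rw [h, mul_div_assoc, div_self hn0, abs_mul]
      norm_num
end
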